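/- Let m ≥ 3 and let b̃ : ℝ^m → ℝ be continuous and satisfy 0 ≤ b̃(x) ≤ C(1+|x|²)^{-2} for all x ∈ ℝ^m and some constant C > 0. Then the infimum of the weighted Sobolev quotient Q_{b̃} over all admissible functions equals the infimum of the unweighted quotient Q_0 over all admissible functions; that is, S_{b̃} = S_0. -/

import Mathlib

open MeasureTheory

/-- The critical Sobolev exponent integral `∫ |f|^{2*}` with `2* = 2m/(m-2)`. -/
noncomputable def critInt (m : ℕ) (f : EuclideanSpace ℝ (Fin m) → ℝ) : ℝ :=
  ∫ x : EuclideanSpace ℝ (Fin m), |f x| ^ ((2 * (m : ℝ)) / ((m : ℝ) - 2))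

/-- A function `f : ℝ^m → ℝ` is admissible if it is `C¹`, `0 < ∫ |f|^{2*} < ∞`
and `∫ ‖∇f‖² < ∞`. -/
def Admissible (m : ℕ) (f : EuclideanSpace ℝ (Fin m) → ℝ) : Prop :=
  ContDiff ℝ 1 f ∧
  Integrable (fun x : EuclideanSpace ℝ (Fin m) =>
    |f x| ^ ((2 * (m : ℝ)) / ((m : ℝ) - 2))) ∧
  0 < critInt m f ∧
  Integrable (fun x : EuclideanSpace ℝ (Fin m) => ‖fderiv ℝ f x‖ ^ 2)

/-- The weighted Sobolev quotient `Q_b(f)`; note `2/2* = (m-2)/m`. -/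
noncomputable def sobolevQuot (m : ℕ) (b : EuclideanSpace ℝ (Fin m) → ℝ)
    (f : EuclideanSpace ℝ (Fin m) → ℝ) : ℝ :=
  (∫ x : EuclideanSpace ℝ (Fin m), (‖fderiv ℝ f x‖ ^ 2 + b x * f x ^ 2)) /
    (critInt m f) ^ (((m : ℝ) - 2) / (m : ℝ))

/-- The infimum `S_b` of the weighted Sobolev quotient over all admissible functions. -/
noncomputable def sobolevInf (m : ℕ) (b : EuclideanSpace ℝ (Fin m) → ℝ) : ℝ :=
  sInf {r : ℝ | ∃ f, Admissible m f ∧ sobolevQuot m b f = r}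

/-! Since `b ≥ 0`, `Q_0 ≤ Q_b` pointwise, so `S_0 ≤ S_b`. Conversely, translating an admissible
`f` by `v` changes neither `∫ ‖∇f‖²` nor `∫ |f|^{2*}`, and the weighted term
`∫ b(y + v) f(y)² dy` tends to `0` as `‖v‖ → ∞`. Indeed, with `p = m/2`, `q = m/(m-2)` and
`m/4 < r < p`, the decay of `b` puts it in `Lʳ`, and writing `b f² = b^{r/p} · (b^{1-r/p} f²)`,
Hölder bounds the weighted term by `(∫ b^r)^{1/p} (∫ (b(· + v)^{1-r/p} f²)^q)^{1/q}`; the last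
integral tends to `0` by dominated convergence, because `b` is bounded and vanishes at infinity
while `(f²)^q = |f|^{2*}` is integrable. Hence `Q_b(f(· - v)) → Q_0(f)`. -/

open Filter Topology Bornology Module

lemma Real.holderConjugate_div_two_div_sub_two {d : ℝ} (hd : 2 < d) :
    (d / 2).HolderConjugate (d / (d - 2)) := by
  refine ⟨?_, by linarith, by apply div_pos <;> linarith⟩
  rw [inv_div, inv_div, inv_one, ← add_div, add_sub_cancel, div_self (by linarith)]

lemma Real.sq_rpow_eq_abs_rpow (x s : ℝ) : (x ^ 2) ^ s = |x| ^ (2 * s) := by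
  rw [← sq_abs, ← Real.rpow_natCast, ← Real.rpow_mul (abs_nonneg x)]
  norm_num

lemma Real.rpow_mul_rpow_le {a c s β q : ℝ} (ha : 0 ≤ a) (hac : a ≤ c) (hs : 0 ≤ s)
    (hβ : 0 ≤ β) (hq : 0 ≤ q) : (a ^ β * s) ^ q ≤ (c ^ β) ^ q * s ^ q := by
  rw [Real.mul_rpow (Real.rpow_nonneg ha β) hs]
  gcongr

lemma Real.sInf_image_eq_of_le_of_forall_exists_le_add {α : Type*} {A : Set α} {F G : α → ℝ}
    (hG : BddBelow (G '' A)) (hGF : ∀ a ∈ A, G a ≤ F a)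
    (hFG : ∀ a ∈ A, ∀ ε > 0, ∃ a' ∈ A, F a' ≤ G a + ε) :
    sInf (F '' A) = sInf (G '' A) := by
  obtain rfl | hA := A.eq_empty_or_nonempty
  · simp
  have hF : BddBelow (F '' A) := by
    obtain ⟨c, hc⟩ := hG
    exact ⟨c, Set.forall_mem_image.2 fun a ha => (hc (Set.mem_image_of_mem G ha)).trans (hGF a ha)⟩
  refine le_antisymm (le_csInf (hA.image G) (Set.forall_mem_image.2 fun a ha => ?_))
    (le_csInf (hA.image F) (Set.forall_mem_image.2 fun a ha =>
      (csInf_le hG (Set.mem_image_of_mem G ha)).trans (hGF a ha)))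
  refine le_of_forall_pos_le_add fun ε hε => ?_
  obtain ⟨a', ha', hle⟩ := hFG a ha ε hε
  exact (csInf_le hF (Set.mem_image_of_mem F ha')).trans hle

namespace MeasureTheory

section Holder

variable {α : Type*} [MeasurableSpace α] {μ : Measure α}

lemma memLp_ofReal_of_integrable_rpow {p : ℝ} (hp : 0 < p) {u : α → ℝ}
    (hu : AEStronglyMeasurable u μ) (hu0 : ∀ x, 0 ≤ u x)
    (hup : Integrable (fun x => u x ^ p) μ) : MemLp u (ENNReal.ofReal p) μ := by
  refine (integrable_norm_rpow_iff hu (by simpa using hp) ENNReal.ofReal_ne_top).1 ?_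
  simpa only [Real.norm_of_nonneg (hu0 _), ENNReal.toReal_ofReal hp.le] using hup

lemma integrable_mul_of_holderConjugate {p q : ℝ} (hpq : p.HolderConjugate q) {u g : α → ℝ}
    (hu : AEStronglyMeasurable u μ) (hg : AEStronglyMeasurable g μ)
    (hu0 : ∀ x, 0 ≤ u x) (hg0 : ∀ x, 0 ≤ g x)
    (hup : Integrable (fun x => u x ^ p) μ) (hgq : Integrable (fun x => g x ^ q) μ) :
    Integrable (fun x => u x * g x) μ :=
  ((hup.div_const p).add (hgq.div_const q)).mono' (hu.mul hg) <| .of_forall fun x => by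
    rw [Real.norm_of_nonneg (mul_nonneg (hu0 x) (hg0 x))]
    exact Real.young_inequality_of_nonneg (hu0 x) (hg0 x) hpq

lemma integral_mul_le_of_holderConjugate {p q r : ℝ} (hpq : p.HolderConjugate q)
    {u g : α → ℝ} (hu : Measurable u) (hg : Measurable g) (hu0 : ∀ x, 0 ≤ u x)
    (hg0 : ∀ x, 0 ≤ g x) (hur : Integrable (fun x => u x ^ r) μ)
    (hug : Integrable (fun x => (u x ^ (1 - r / p) * g x) ^ q) μ) :
    ∫ x, u x * g x ∂μ ≤
      (∫ x, u x ^ r ∂μ) ^ (1 / p) * (∫ x, (u x ^ (1 - r / p) * g x) ^ q ∂μ) ^ (1 / q) := by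
  have hp := hpq.pos
  have hsplit : ∀ x, u x * g x = u x ^ (r / p) * (u x ^ (1 - r / p) * g x) := fun x => by
    rw [← mul_assoc, ← Real.rpow_add' (hu0 x) (by simp), add_sub_cancel, Real.rpow_one]
  have hpow : ∀ x, (u x ^ (r / p)) ^ p = u x ^ r := fun x => by
    rw [← Real.rpow_mul (hu0 x), div_mul_cancel₀ r hp.ne']
  have hα0 : ∀ x, 0 ≤ u x ^ (r / p) := fun x => Real.rpow_nonneg (hu0 x) _
  have hβ0 : ∀ x, 0 ≤ u x ^ (1 - r / p) * g x := fun x =>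
    mul_nonneg (Real.rpow_nonneg (hu0 x) _) (hg0 x)
  simp_rw [hsplit, ← hpow]
  refine integral_mul_le_Lp_mul_Lq_of_nonneg hpq (.of_forall hα0) (.of_forall hβ0) ?_ ?_
  · exact memLp_ofReal_of_integrable_rpow hp (hu.pow_const _).aestronglyMeasurable hα0
      (by simpa only [hpow] using hur)
  · exact memLp_ofReal_of_integrable_rpow hpq.symm.pos
      ((hu.pow_const _).mul hg).aestronglyMeasurable hβ0 hug

end Holder

section Translation

variable {E : Type*} [NormedAddCommGroup E] [MeasurableSpace E] [BorelSpace E] {μ : Measure E}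
  {w g : E → ℝ} {C : ℝ}

lemma tendsto_integral_rpow_comp_add_mul {β q : ℝ} (hβ : 0 < β) (hq : 0 < q)
    (hw : Measurable w) (hg : Measurable g) (hw0 : ∀ x, 0 ≤ w x) (hg0 : ∀ x, 0 ≤ g x)
    (hwC : ∀ x, w x ≤ C) (hw_lim : Tendsto w (cobounded E) (𝓝 0))
    (hgq : Integrable (fun x => g x ^ q) μ) :
    Tendsto (fun v => ∫ y, (w (y + v) ^ β * g y) ^ q ∂μ) (cobounded E) (𝓝 0) := by
  have : (cobounded E).IsCountablyGenerated := by rw [← comap_norm_atTop]; infer_instance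
  have hlim : ∀ y, Tendsto (fun v => (w (y + v) ^ β * g y) ^ q) (cobounded E) (𝓝 0) := by
    intro y
    have := (((hw_lim.comp (tendsto_const_add_cobounded y)).rpow_const (.inr hβ.le)).mul_const
      (g y)).rpow_const (p := q) (.inr hq.le)
    simpa [Real.zero_rpow hβ.ne', Real.zero_rpow hq.ne'] using this
  simpa using tendsto_integral_filter_of_dominated_convergence
    (F := fun v y => (w (y + v) ^ β * g y) ^ q) (fun y => (C ^ β) ^ q * g y ^ q)
    (.of_forall fun v => (((hw.comp (measurable_add_const v)).pow_const β).mul hg).pow_const q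
      |>.aestronglyMeasurable)
    (.of_forall fun v => .of_forall fun y => by
      rw [Real.norm_of_nonneg (Real.rpow_nonneg
        (mul_nonneg (Real.rpow_nonneg (hw0 _) β) (hg0 y)) q)]
      exact Real.rpow_mul_rpow_le (hw0 _) (hwC _) (hg0 y) hβ.le hq.le)
    (hgq.const_mul _) (.of_forall hlim)

variable [μ.IsAddRightInvariant]

theorem tendsto_integral_comp_add_mul {p q r : ℝ} (hpq : p.HolderConjugate q) (hrp : r < p)
    (hw : Measurable w) (hg : Measurable g) (hw0 : ∀ x, 0 ≤ w x)
    (hg0 : ∀ x, 0 ≤ g x) (hwC : ∀ x, w x ≤ C) (hw_lim : Tendsto w (cobounded E) (𝓝 0))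
    (hwr : Integrable (fun x => w x ^ r) μ) (hgq : Integrable (fun x => g x ^ q) μ) :
    Tendsto (fun v => ∫ y, w (y + v) * g y ∂μ) (cobounded E) (𝓝 0) := by
  have hβ : 0 < 1 - r / p := by rw [sub_pos, div_lt_one hpq.pos]; exact hrp
  have hq := hpq.symm.pos
  have hJ := tendsto_integral_rpow_comp_add_mul hβ hq hw hg hw0 hg0 hwC hw_lim hgq
  have hbound : ∀ v, ∫ y, w (y + v) * g y ∂μ ≤
      (∫ x, w x ^ r ∂μ) ^ (1 / p) * (∫ y, (w (y + v) ^ (1 - r / p) * g y) ^ q ∂μ) ^ (1 / q) := by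
    intro v
    have hwv := hw.comp (measurable_add_const v)
    have hJint : Integrable (fun y => (w (y + v) ^ (1 - r / p) * g y) ^ q) μ :=
      (hgq.const_mul ((C ^ (1 - r / p)) ^ q)).mono'
        (((hwv.pow_const _).mul hg).pow_const q).aestronglyMeasurable <| .of_forall fun y => by
          rw [Real.norm_of_nonneg (Real.rpow_nonneg
            (mul_nonneg (Real.rpow_nonneg (hw0 _) _) (hg0 y)) q)]
          exact Real.rpow_mul_rpow_le (hw0 _) (hwC _) (hg0 y) hβ.le hq.le
    rw [← integral_add_right_eq_self (fun x => w x ^ r) v]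
    exact integral_mul_le_of_holderConjugate hpq hwv hg (fun y => hw0 _) hg0
      (hwr.comp_add_right v) hJint
  have hlim : Tendsto (fun v => (∫ x, w x ^ r ∂μ) ^ (1 / p) *
      (∫ y, (w (y + v) ^ (1 - r / p) * g y) ^ q ∂μ) ^ (1 / q)) (cobounded E) (𝓝 0) := by
    have := (hJ.rpow_const (.inr (one_div_pos.2 hq).le)).const_mul ((∫ x, w x ^ r ∂μ) ^ (1 / p))
    rwa [Real.zero_rpow (one_div_pos.2 hq).ne', mul_zero] at this
  exact tendsto_of_tendsto_of_tendsto_of_le_of_le tendsto_const_nhds hlim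
    (fun v => integral_nonneg fun y => mul_nonneg (hw0 _) (hg0 y)) hbound

end Translation

end MeasureTheory

section Decay

variable {E : Type*} [NormedAddCommGroup E] {w : E → ℝ} {C : ℝ}

lemma le_of_le_div_one_add_sq (hw0 : ∀ x, 0 ≤ w x) (hwC : ∀ x, w x ≤ C / (1 + ‖x‖ ^ 2) ^ 2)
    (x : E) : w x ≤ C := by
  have hC : 0 ≤ C := by simpa using (hw0 0).trans (hwC 0)
  exact (hwC x).trans (div_le_self hC (one_le_pow₀ (le_add_of_nonneg_right (sq_nonneg _))))

lemma tendsto_cobounded_of_le_div_one_add_sq (hw0 : ∀ x, 0 ≤ w x)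
    (hwC : ∀ x, w x ≤ C / (1 + ‖x‖ ^ 2) ^ 2) : Tendsto w (cobounded E) (𝓝 0) := by
  have hden : Tendsto (fun x : E => (1 + ‖x‖ ^ 2) ^ 2) (cobounded E) atTop :=
    (tendsto_pow_atTop two_ne_zero).comp <| tendsto_atTop_add_const_left _ 1 <|
      (tendsto_pow_atTop two_ne_zero).comp tendsto_norm_cobounded_atTop
  exact tendsto_of_tendsto_of_tendsto_of_le_of_le tendsto_const_nhds
    (tendsto_const_nhds.div_atTop hden) hw0 hwC

lemma integrable_rpow_of_le_div_one_add_sq [NormedSpace ℝ E] [FiniteDimensional ℝ E]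
    [MeasurableSpace E] [BorelSpace E] {μ : Measure E} [μ.IsAddHaarMeasure] (hw : Measurable w)
    (hw0 : ∀ x, 0 ≤ w x) (hwC : ∀ x, w x ≤ C / (1 + ‖x‖ ^ 2) ^ 2) {s : ℝ}
    (hs : finrank ℝ E < 4 * s) : Integrable (fun x => w x ^ s) μ := by
  have hs0 : 0 < s := by linarith [(finrank ℝ E).cast_nonneg (α := ℝ)]
  have hC : 0 ≤ C := by simpa using (hw0 0).trans (hwC 0)
  refine ((integrable_rpow_neg_one_add_norm_sq (μ := μ) hs).const_mul (C ^ s)).mono'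
    (hw.pow_const s).aestronglyMeasurable (.of_forall fun x => ?_)
  have h1 : (0 : ℝ) < 1 + ‖x‖ ^ 2 := by positivity
  rw [Real.norm_of_nonneg (Real.rpow_nonneg (hw0 x) s)]
  calc w x ^ s ≤ (C / (1 + ‖x‖ ^ 2) ^ 2) ^ s := Real.rpow_le_rpow (hw0 x) (hwC x) hs0.le
    _ = C ^ s * (1 + ‖x‖ ^ 2) ^ (-(4 * s) / 2) := by
      rw [Real.div_rpow hC (by positivity), ← Real.rpow_natCast, ← Real.rpow_mul h1.le,
        div_eq_mul_inv, ← Real.rpow_neg h1.le]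
      congr 2
      push_cast
      ring

end Decay

section Sobolev

variable {m : ℕ} {b f : EuclideanSpace ℝ (Fin m) → ℝ} {C : ℝ}

lemma critInt_nonneg (f : EuclideanSpace ℝ (Fin m) → ℝ) : 0 ≤ critInt m f :=
  integral_nonneg fun _ => Real.rpow_nonneg (abs_nonneg _) _

lemma critInt_comp_sub (f : EuclideanSpace ℝ (Fin m) → ℝ) (v : EuclideanSpace ℝ (Fin m)) :
    critInt m (fun x => f (x - v)) = critInt m f :=
  integral_sub_right_eq_self (fun x => |f x| ^ ((2 * (m : ℝ)) / ((m : ℝ) - 2))) v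

lemma sobolevQuot_nonneg (hb : ∀ x, 0 ≤ b x) (f : EuclideanSpace ℝ (Fin m) → ℝ) :
    0 ≤ sobolevQuot m b f :=
  div_nonneg (integral_nonneg fun x => add_nonneg (sq_nonneg _) (mul_nonneg (hb x) (sq_nonneg _)))
    (Real.rpow_nonneg (critInt_nonneg f) _)

lemma sobolevQuot_zero_comp_sub (f : EuclideanSpace ℝ (Fin m) → ℝ)
    (v : EuclideanSpace ℝ (Fin m)) :
    sobolevQuot m (fun _ => 0) (fun x => f (x - v)) = sobolevQuot m (fun _ => 0) f := by
  simp only [sobolevQuot, zero_mul, add_zero, fderiv_comp_sub, critInt_comp_sub]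
  rw [integral_sub_right_eq_self (fun x => ‖fderiv ℝ f x‖ ^ 2) v]

lemma sobolevQuot_eq_add (hf : Admissible m f) (hbf : Integrable (fun x => b x * f x ^ 2)) :
    sobolevQuot m b f = sobolevQuot m (fun _ => 0) f +
      (∫ x, b x * f x ^ 2) / critInt m f ^ (((m : ℝ) - 2) / m) := by
  simp only [sobolevQuot, zero_mul, add_zero]
  rw [integral_add hf.2.2.2 hbf, add_div]

lemma Admissible.comp_sub (hf : Admissible m f) (v : EuclideanSpace ℝ (Fin m)) :
    Admissible m (fun x => f (x - v)) := by
  obtain ⟨hC1, hcrit, hpos, hgrad⟩ := hf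
  refine ⟨hC1.comp (contDiff_id.sub contDiff_const), hcrit.comp_sub_right v,
    (critInt_comp_sub f v).symm ▸ hpos, ?_⟩
  simpa only [fderiv_comp_sub] using hgrad.comp_sub_right v

lemma Admissible.integrable_sq_rpow (hf : Admissible m f) :
    Integrable (fun x => (f x ^ 2) ^ ((m : ℝ) / ((m : ℝ) - 2))) := by
  simpa only [Real.sq_rpow_eq_abs_rpow, mul_div_assoc] using hf.2.1

lemma integrable_mul_sq_of_le_div_one_add_sq (hm : 2 < m) (hb : Measurable b)
    (hb0 : ∀ x, 0 ≤ b x) (hbC : ∀ x, b x ≤ C / (1 + ‖x‖ ^ 2) ^ 2) (hf : Admissible m f) :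
    Integrable (fun x => b x * f x ^ 2) := by
  have hm' : (2 : ℝ) < m := by exact_mod_cast hm
  refine integrable_mul_of_holderConjugate (Real.holderConjugate_div_two_div_sub_two hm')
    hb.aestronglyMeasurable (hf.1.continuous.pow 2).aestronglyMeasurable hb0
    (fun x => sq_nonneg _) (integrable_rpow_of_le_div_one_add_sq hb hb0 hbC ?_)
    hf.integrable_sq_rpow
  rw [finrank_euclideanSpace_fin]
  linarith

theorem tendsto_sobolevQuot_comp_sub (hm : 2 < m) (hb : Measurable b) (hb0 : ∀ x, 0 ≤ b x)
    (hbC : ∀ x, b x ≤ C / (1 + ‖x‖ ^ 2) ^ 2) (hf : Admissible m f) :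
    Tendsto (fun v => sobolevQuot m b (fun x => f (x - v))) (cobounded _)
      (𝓝 (sobolevQuot m (fun _ => 0) f)) := by
  have hm' : (2 : ℝ) < m := by exact_mod_cast hm
  -- any `r` with `m / 4 < r < m / 2` would do
  have hI : Tendsto (fun v => ∫ y, b (y + v) * f y ^ 2) (cobounded _) (𝓝 0) :=
    tendsto_integral_comp_add_mul (Real.holderConjugate_div_two_div_sub_two hm')
      (r := 3 * m / 8) (by linarith) hb (hf.1.continuous.pow 2).measurable hb0
      (fun _ => sq_nonneg _) (le_of_le_div_one_add_sq hb0 hbC)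
      (tendsto_cobounded_of_le_div_one_add_sq hb0 hbC)
      (integrable_rpow_of_le_div_one_add_sq hb hb0 hbC
        (by rw [finrank_euclideanSpace_fin]; linarith))
      hf.integrable_sq_rpow
  have hquot : ∀ v, sobolevQuot m b (fun x => f (x - v)) = sobolevQuot m (fun _ => 0) f +
      (∫ y, b (y + v) * f y ^ 2) / critInt m f ^ (((m : ℝ) - 2) / m) := fun v => by
    rw [sobolevQuot_eq_add (hf.comp_sub v)
      (integrable_mul_sq_of_le_div_one_add_sq hm hb hb0 hbC (hf.comp_sub v)),
      sobolevQuot_zero_comp_sub, critInt_comp_sub,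
      ← integral_add_right_eq_self (fun x => b x * f (x - v) ^ 2) v]
    simp only [add_sub_cancel_right]
  simpa [hquot] using (hI.div_const (critInt m f ^ (((m : ℝ) - 2) / m))).const_add
    (sobolevQuot m (fun _ => 0) f)

end Sobolev

theorem weighted_sobolev_inf_eq_general (m : ℕ) (hm : 3 ≤ m)
    (b : EuclideanSpace ℝ (Fin m) → ℝ) (hb_cont : Continuous b)
    (C : ℝ)
    (hb_nonneg : ∀ x, 0 ≤ b x)
    (hb_bound : ∀ x, b x ≤ C / (1 + ‖x‖ ^ 2) ^ 2) :
    sobolevInf m b = sobolevInf m (fun _ => 0) := by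
  have hm2 : 2 < m := by omega
  have : NeZero m := ⟨by omega⟩
  have hb := hb_cont.measurable
  refine Real.sInf_image_eq_of_le_of_forall_exists_le_add (A := {f | Admissible m f})
    ⟨0, Set.forall_mem_image.2 fun f _ => sobolevQuot_nonneg (fun _ => le_rfl) f⟩
    (fun f hf => ?_) (fun f hf ε hε => ?_)
  · rw [sobolevQuot_eq_add hf
      (integrable_mul_sq_of_le_div_one_add_sq hm2 hb hb_nonneg hb_bound hf)]
    exact le_add_of_nonneg_right (div_nonneg
      (integral_nonneg fun x => mul_nonneg (hb_nonneg x) (sq_nonneg _))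
      (Real.rpow_nonneg (critInt_nonneg f) _))
  · obtain ⟨v, hv⟩ := ((tendsto_sobolevQuot_comp_sub hm2 hb hb_nonneg hb_bound hf).eventually
      (gt_mem_nhds (lt_add_of_pos_right _ hε))).exists
    exact ⟨_, hf.comp_sub v, hv.le⟩

/-- if `0 ≤ b̃(x) ≤ C(1+|x|²)⁻²`, then `S_{b̃} = S_0`. -/
theorem weighted_sobolev_inf_eq (m : ℕ) (hm : 3 ≤ m)
    (b : EuclideanSpace ℝ (Fin m) → ℝ) (hb_cont : Continuous b)
    (C : ℝ) (hC : 0 < C)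
    (hb_nonneg : ∀ x, 0 ≤ b x)
    (hb_bound : ∀ x, b x ≤ C / (1 + ‖x‖ ^ 2) ^ 2) :
    sobolevInf m b = sobolevInf m (fun _ => 0) :=
  weighted_sobolev_inf_eq_general m hm b hb_cont C hb_nonneg hb_bound
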